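/- arXiv:1812.10331 — 4 statements merged into one kernel-verified Lean document; each statement's English description precedes it below -/
import Mathlib

section
/- Let H be a Hilbert space, {P_n}_{n∈Z} a resolution of the identity, and {λ_n}_{n∈Z} complex numbers such that η = sup_j ∑_{n≠j} |λ_n − λ_j|^{−2} < ∞. For X ∈ B(H), define ΓX by (ΓX)x = ∑_{m≠n} (λ_m − λ_n)^{−1} P_m X P_n x. Then ΓX is a well-defined bounded operator with ‖ΓX‖ ≤ √η ‖X‖. -/
/-!
For `m ≠ m'` the vectors `P m y` and `P m' y'` are orthogonal, so the norm square of a finite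
partial sum of `∑ (λ m - λ n)⁻¹ • P m (X (P n x))` splits over the rows `m` by Pythagoras. In a
fixed row, Cauchy–Schwarz against the weights `|λ m - λ n|⁻²`, whose sum is at most `η`, bounds
the row by `η ∑ₙ ‖P m (X (P n x))‖²`, and by Bessel's inequality (twice)
`∑ₘ,ₙ ‖P m (X (P n x))‖² ≤ ∑ₙ ‖X (P n x)‖² ≤ ‖X‖² ‖x‖²`. Applied to finite sets far out, the
same estimate is the Cauchy criterion for the double series.
-/

open Finset

theorem norm_sum_smul_sq_le {ι 𝕜 F : Type*} [NormedField 𝕜] [SeminormedAddCommGroup F]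
    [NormedSpace 𝕜 F] (s : Finset ι) (c : ι → 𝕜) (v : ι → F) :
    ‖∑ i ∈ s, c i • v i‖ ^ 2 ≤ (∑ i ∈ s, ‖c i‖ ^ 2) * ∑ i ∈ s, ‖v i‖ ^ 2 :=
  calc ‖∑ i ∈ s, c i • v i‖ ^ 2 ≤ (∑ i ∈ s, ‖c i‖ * ‖v i‖) ^ 2 := by
        gcongr
        simpa only [norm_smul] using norm_sum_le s fun i => c i • v i
    _ ≤ _ := sum_mul_sq_le_sq_mul_sq s _ _

theorem summable_of_norm_sum_sq_le {ι F : Type*} [SeminormedAddCommGroup F] [CompleteSpace F]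
    {f : ι → F} {g : ι → ℝ} (hg : Summable g)
    (h : ∀ s : Finset ι, ‖∑ i ∈ s, f i‖ ^ 2 ≤ ∑ i ∈ s, g i) : Summable f := by
  refine summable_iff_vanishing_norm.mpr fun ε hε => ?_
  obtain ⟨s, hs⟩ := summable_iff_vanishing_norm.mp hg (ε ^ 2) (by positivity)
  refine ⟨s, fun t ht => ?_⟩
  have hsq : ‖∑ i ∈ t, f i‖ ^ 2 < ε ^ 2 :=
    (h t).trans_lt ((le_abs_self _).trans_lt (hs t ht))
  exact (pow_lt_pow_iff_left₀ (norm_nonneg _) hε.le two_ne_zero).mp hsq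

theorem exists_hasSum_apply_of_norm_sum_le {ι 𝕜 E F : Type*} [NontriviallyNormedField 𝕜]
    [SeminormedAddCommGroup E] [NormedSpace 𝕜 E] [NormedAddCommGroup F] [NormedSpace 𝕜 F]
    (T : ι → E →L[𝕜] F) (hT : ∀ x, Summable fun i => T i x) {M : ℝ} (hM : 0 ≤ M)
    (hbound : ∀ x (s : Finset ι), ‖∑ i ∈ s, T i x‖ ≤ M * ‖x‖) :
    ∃ G : E →L[𝕜] F, (∀ x, HasSum (fun i => T i x) (G x)) ∧ ‖G‖ ≤ M := by
  let G : E →ₗ[𝕜] F :=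
    { toFun := fun x => ∑' i, T i x
      map_add' := fun x y => by simp only [map_add]; exact (hT x).tsum_add (hT y)
      map_smul' := fun c x => by simp only [map_smul]; exact (hT x).tsum_const_smul c }
  have hG : ∀ x, ‖G x‖ ≤ M * ‖x‖ := fun x => le_of_tendsto' (hT x).hasSum.norm (hbound x)
  exact ⟨G.mkContinuous M hG, fun x => (hT x).hasSum, G.mkContinuous_norm_le hM hG⟩

theorem sum_norm_inv_sub_sq_le {ι 𝕜 : Type*} [NormedField 𝕜] {lam : ι → 𝕜} {η : ℝ} {j : ι}
    (hsum : Summable fun n : {n // n ≠ j} => (‖lam n - lam j‖ ^ 2)⁻¹)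
    (hη : ∑' n : {n // n ≠ j}, (‖lam n - lam j‖ ^ 2)⁻¹ ≤ η) (t : Finset ι) :
    ∑ n ∈ t, ‖(lam j - lam n)⁻¹‖ ^ 2 ≤ η := by
  set w : ι → ℝ := fun n => (‖lam n - lam j‖ ^ 2)⁻¹
  -- `w j = 0` because `0⁻¹ = 0`, so the sums over `n ≠ j` are sums over all `n`.
  have hsupp : Function.support w ⊆ {n | n ≠ j} := fun n hn hnj => hn (by simp [w, hnj])
  have hw : Summable w := by
    have h : Summable (w ∘ ((↑) : {n | n ≠ j} → ι)) := hsum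
    rwa [summable_subtype_iff_indicator, Set.indicator_eq_self.mpr hsupp] at h
  calc ∑ n ∈ t, ‖(lam j - lam n)⁻¹‖ ^ 2 = ∑ n ∈ t, w n := by
        simp only [w, norm_inv, inv_pow, norm_sub_rev]
    _ ≤ ∑' n, w n := hw.sum_le_tsum t fun n _ => by positivity
    _ ≤ η := by rwa [← tsum_subtype_eq_of_support_subset hsupp]

section InnerProductSpace

variable {𝕜 E : Type*} [RCLike 𝕜] [NormedAddCommGroup E] [InnerProductSpace 𝕜 E]

theorem norm_sum_sq_eq_sum_norm_sq_of_pairwise_inner_eq_zero {ι : Type*} {s : Finset ι}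
    {v : ι → E} (hv : (s : Set ι).Pairwise fun i j => inner 𝕜 (v i) (v j) = 0) :
    ‖∑ i ∈ s, v i‖ ^ 2 = ∑ i ∈ s, ‖v i‖ ^ 2 := by
  rw [← @inner_self_eq_norm_sq 𝕜, sum_inner, map_sum]
  refine sum_congr rfl fun i hi => ?_
  rw [inner_sum, sum_eq_single i (fun j hj hji => hv hi hj hji.symm) (absurd hi),
    inner_self_eq_norm_sq]

theorem norm_sum_smul_sq_le_of_orthogonal_rows {ι κ : Type*} {v : ι × κ → E} {c : ι × κ → 𝕜}
    {η : ℝ} (hv : ∀ p q, p.1 ≠ q.1 → inner 𝕜 (v p) (v q) = 0)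
    (hc : ∀ i (t : Finset κ), ∑ j ∈ t, ‖c (i, j)‖ ^ 2 ≤ η) (S : Finset (ι × κ)) :
    ‖∑ p ∈ S, c p • v p‖ ^ 2 ≤ η * ∑ p ∈ S, ‖v p‖ ^ 2 := by
  classical
  set t : ι → Finset κ := fun i => (S.filter (·.1 = i)).image Prod.snd
  have hS : ∀ p, p ∈ S ↔ p.1 ∈ S.image Prod.fst ∧ p.2 ∈ t p.1 := by
    simpa [t] using fun a b (h : (a, b) ∈ S) => ⟨b, h⟩
  rw [sum_finset_product S _ t hS, sum_finset_product S _ t hS,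
    norm_sum_sq_eq_sum_norm_sq_of_pairwise_inner_eq_zero (𝕜 := 𝕜), mul_sum]
  · gcongr with i
    exact (norm_sum_smul_sq_le _ _ _).trans (by gcongr; exact hc i _)
  · intro i _ i' _ hii'
    simp only [sum_inner, inner_sum]
    refine sum_eq_zero fun j' _ => sum_eq_zero fun j _ => ?_
    rw [inner_smul_left, inner_smul_right, hv (i, j) (i', j') hii', mul_zero, mul_zero]

variable [CompleteSpace E]

theorem inner_apply_apply_eq_zero_of_comp_eq_zero {P Q : E →L[𝕜] E} (hP : IsSelfAdjoint P)
    (hPQ : P ∘L Q = 0) (u v : E) : inner 𝕜 (P u) (Q v) = 0 := by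
  rw [← hP.adjoint_eq, ContinuousLinearMap.adjoint_inner_left, ← ContinuousLinearMap.comp_apply,
    hPQ, zero_apply, inner_zero_right]

variable {ι : Type*} {P : ι → E →L[𝕜] E} (hsa : ∀ n, IsSelfAdjoint (P n))
  (hidem : ∀ n, IsIdempotentElem (P n)) (hres : ∀ x, HasSum (fun n => P n x) x)
include hsa hidem hres

theorem hasSum_norm_apply_sq (x : E) : HasSum (fun n => ‖P n x‖ ^ 2) (‖x‖ ^ 2) := by
  have h := ((hres x).mapL (innerSL 𝕜 x)).mapL RCLike.reCLM
  have hP : ∀ n, inner 𝕜 x (P n x) = inner 𝕜 (P n x) (P n x) := fun n => by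
    rw [← (hsa n).adjoint_eq, ContinuousLinearMap.adjoint_inner_left, ← mul_apply_eq_comp,
      (hsa n).adjoint_eq, (hidem n).eq]
  simpa only [innerSL_apply_apply, RCLike.reCLM_apply, hP, inner_self_eq_norm_sq] using h

theorem sum_norm_apply_sq_le (s : Finset ι) (x : E) : ∑ n ∈ s, ‖P n x‖ ^ 2 ≤ ‖x‖ ^ 2 :=
  sum_le_hasSum s (fun _ _ => by positivity) (hasSum_norm_apply_sq hsa hidem hres x)

theorem sum_norm_apply_comp_apply_sq_le (X : E →L[𝕜] E) (x : E) (S : Finset (ι × ι)) :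
    ∑ p ∈ S, ‖P p.1 (X (P p.2 x))‖ ^ 2 ≤ ‖X‖ ^ 2 * ‖x‖ ^ 2 := by
  classical
  calc ∑ p ∈ S, ‖P p.1 (X (P p.2 x))‖ ^ 2
      ≤ ∑ p ∈ S.image Prod.fst ×ˢ S.image Prod.snd, ‖P p.1 (X (P p.2 x))‖ ^ 2 :=
        sum_le_sum_of_subset_of_nonneg subset_product fun _ _ _ => by positivity
    _ = ∑ n ∈ S.image Prod.snd, ∑ m ∈ S.image Prod.fst, ‖P m (X (P n x))‖ ^ 2 :=
        sum_product_right _ _ _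
    _ ≤ ∑ n ∈ S.image Prod.snd, ‖X‖ ^ 2 * ‖P n x‖ ^ 2 := by
        gcongr with n
        refine (sum_norm_apply_sq_le hsa hidem hres _ _).trans ?_
        rw [← mul_pow]
        gcongr
        exact X.le_opNorm _
    _ ≤ ‖X‖ ^ 2 * ‖x‖ ^ 2 := by
        rw [← mul_sum]
        gcongr
        exact sum_norm_apply_sq_le hsa hidem hres _ _

end InnerProductSpace

/-- Given a resolution of the identity `{P n}` on a Hilbert space and
scalars `λ n` with `η = sup_j ∑_{n ≠ j} |λ n − λ j|⁻² < ∞`, the transform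
`(Γ X) x = ∑_{m ≠ n} (λ m − λ n)⁻¹ P m X P n x` defines a bounded operator with
`‖Γ X‖ ≤ √η ‖X‖`. -/
theorem stmt3 {H : Type*} [NormedAddCommGroup H] [InnerProductSpace ℂ H] [CompleteSpace H]
    (P : ℤ → H →L[ℂ] H)
    (hsa : ∀ n, IsSelfAdjoint (P n))
    (hidem : ∀ n, IsIdempotentElem (P n))
    (hdisj : ∀ m n, m ≠ n → (P m) ∘L (P n) = 0)
    (hres : ∀ x : H, HasSum (fun n => P n x) x)
    (lam : ℤ → ℂ) (η : ℝ)
    (hsum : ∀ j : ℤ, Summable (fun n : {n : ℤ // n ≠ j} =>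
      ((‖lam (n : ℤ) - lam j‖) ^ 2)⁻¹))
    (hη : ∀ j : ℤ, (∑' n : {n : ℤ // n ≠ j},
      ((‖lam (n : ℤ) - lam j‖) ^ 2)⁻¹) ≤ η)
    (X : H →L[ℂ] H) :
    ∃ G : H →L[ℂ] H,
      (∀ x : H, HasSum
        (fun p : ℤ × ℤ =>
          if p.1 = p.2 then 0 else (lam p.1 - lam p.2)⁻¹ • P p.1 (X (P p.2 x)))
        (G x)) ∧
      ‖G‖ ≤ Real.sqrt η * ‖X‖ := by
  have hc : ∀ m (t : Finset ℤ), ∑ n ∈ t, ‖(lam m - lam n)⁻¹‖ ^ 2 ≤ η :=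
    fun m => sum_norm_inv_sub_sq_le (hsum m) (hη m)
  have hη0 : 0 ≤ η := by simpa using hc 0 ∅
  -- On the diagonal `(lam m - lam m)⁻¹ = 0⁻¹ = 0`, so `T` needs no case split.
  set T : ℤ × ℤ → H →L[ℂ] H := fun p => (lam p.1 - lam p.2)⁻¹ • (P p.1 ∘L X ∘L P p.2)
  have hsq : ∀ x S, ‖∑ p ∈ S, T p x‖ ^ 2 ≤ η * ∑ p ∈ S, ‖P p.1 (X (P p.2 x))‖ ^ 2 :=
    fun x => norm_sum_smul_sq_le_of_orthogonal_rows
      (fun _ _ h => inner_apply_apply_eq_zero_of_comp_eq_zero (hsa _) (hdisj _ _ h) _ _) hc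
  have hbessel := sum_norm_apply_comp_apply_sq_le hsa hidem hres X
  have hT : ∀ x, Summable fun p => T p x := fun x =>
    summable_of_norm_sum_sq_le
      ((summable_of_sum_le (fun _ => by positivity) (hbessel x)).mul_left η)
      (by simpa only [mul_sum] using hsq x)
  have hbound : ∀ x S, ‖∑ p ∈ S, T p x‖ ≤ √η * ‖X‖ * ‖x‖ := fun x S => by
    refine le_of_pow_le_pow_left₀ two_ne_zero (by positivity) ?_
    calc ‖∑ p ∈ S, T p x‖ ^ 2 ≤ η * (‖X‖ ^ 2 * ‖x‖ ^ 2) :=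
          (hsq x S).trans (by gcongr; exact hbessel x S)
      _ = (√η * ‖X‖ * ‖x‖) ^ 2 := by rw [mul_pow, mul_pow, Real.sq_sqrt hη0]; ring
  obtain ⟨G, hG, hGnorm⟩ := exists_hasSum_apply_of_norm_sum_le T hT (by positivity) hbound
  refine ⟨G, fun x => ?_, hGnorm⟩
  convert hG x using 2 with p
  split_ifs with h <;> simp [T, h]
end

section
/- Let X: D(X) ⊆ H → H be a closed operator with compact resolvent, and {P_{σ_n}}_{n∈I} a resolution of the identity by orthogonal projections such that each P_{σ_n} maps D(X) into D(X) and X P_{σ_n} x = P_{σ_n} X x for all x ∈ D(X) (block-diagonal structure). Then σ(X) = ⋃_{n∈I} σ(X|_{P_{σ_n}H}), where X|_{P_{σ_n}H} is the restriction of X to the range of P_{σ_n}. -/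
/-!
A compact resolvent `R₀` at `μ₀` turns the spectral problem for `X` into one for `R₀`: on the
domain, `R₀ (X - μ) = 1 - (μ - μ₀) R₀`. By the Fredholm alternative for the compact operator
`R₀`, either `1 - (μ - μ₀) R₀` is invertible, and then `R₀ (1 - (μ - μ₀) R₀)⁻¹` is a resolvent
of `X` at `μ`, or `(μ - μ₀)⁻¹` is an eigenvalue of `R₀`, and then its eigenvectors are
eigenvectors of `X` for `μ`. So every point of the spectrum of `X` is an eigenvalue; some block
projection of an eigenvector is nonzero, and it is an eigenvector of that block. Conversely,
compressing a global resolvent by a block projection gives a resolvent of the block.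
-/

/-- The spectrum of the (possibly unbounded) operator `X` with domain `D`, considered on
the invariant subspace `V`: `μ` lies in the spectrum iff there is no bounded resolvent
operator on `V` mapping into `D ⊓ V` and inverting `X − μ` there. -/
def blockSpectrum {H : Type*} [NormedAddCommGroup H] [InnerProductSpace ℂ H]
    [CompleteSpace H] (X : H →ₗ[ℂ] H) (D V : Submodule ℂ H) : Set ℂ :=
  {μ : ℂ | ¬ ∃ R : H →L[ℂ] H,
    (∀ y ∈ V, R y ∈ D ⊓ V) ∧
    (∀ x, x ∈ D → x ∈ V → R (X x - μ • x) = x) ∧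
    (∀ y ∈ V, X (R y) - μ • R y = y)}

section Resolvent

variable {𝕜 E : Type*} [NontriviallyNormedField 𝕜] [NormedAddCommGroup E] [NormedSpace 𝕜 E]

def IsResolventOn (X : E →ₗ[𝕜] E) (D V : Submodule 𝕜 E) (μ : 𝕜) (R : E →L[𝕜] E) : Prop :=
  (∀ y ∈ V, R y ∈ D ⊓ V) ∧ (∀ x ∈ D, x ∈ V → R (X x - μ • x) = x) ∧
    (∀ y ∈ V, X (R y) - μ • R y = y)

variable {X : E →ₗ[𝕜] E} {D V : Submodule 𝕜 E} {μ μ₀ : 𝕜} {R R₀ : E →L[𝕜] E}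

theorem IsResolventOn.eq_zero_of_apply_eq_smul (hR : IsResolventOn X D V μ R) {x : E}
    (hxD : x ∈ D) (hxV : x ∈ V) (hXx : X x = μ • x) : x = 0 := by
  simpa [hXx] using (hR.2.1 x hxD hxV).symm

theorem IsResolventOn.projection_comp {P : E →L[𝕜] E} (hR : IsResolventOn X D ⊤ μ R)
    (hP : IsIdempotentElem P) (hPD : ∀ x ∈ D, P x ∈ D) (hPX : ∀ x ∈ D, X (P x) = P (X x)) :
    IsResolventOn X D (LinearMap.range (P : E →ₗ[𝕜] E)) μ (P ∘L R) := by
  obtain ⟨hRD, hRl, hRr⟩ := hR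
  have hPfix : ∀ y ∈ LinearMap.range (P : E →ₗ[𝕜] E), P y = y := by
    rintro _ ⟨z, rfl⟩
    exact congrArg (· z) hP.eq
  refine ⟨fun y _ => ⟨hPD _ (hRD y trivial).1, R y, rfl⟩, fun x hxD hxV => ?_, fun y hy => ?_⟩
  · rw [ContinuousLinearMap.comp_apply, hRl x hxD trivial, hPfix x hxV]
  · rw [ContinuousLinearMap.comp_apply, hPX _ (hRD y trivial).1, ← map_smul, ← map_sub,
      hRr y trivial, hPfix y hy]

theorem IsResolventOn.exists_of_isUnit (hR₀ : IsResolventOn X D ⊤ μ₀ R₀)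
    (hu : IsUnit (1 - (μ - μ₀) • R₀)) : ∃ R, IsResolventOn X D ⊤ μ R := by
  obtain ⟨hR₀D, hR₀l, hR₀r⟩ := hR₀
  obtain ⟨u, hu⟩ := hu
  have hcomm : Commute R₀ ↑u⁻¹ := by
    refine Commute.units_inv_right ?_
    rw [hu]
    exact (Commute.one_right R₀).sub_right ((Commute.refl R₀).smul_right _)
  have hleft : ∀ x ∈ D, R₀ (X x - μ • x) = (u : E →L[𝕜] E) x := by
    intro x hx
    have : X x - μ • x = (X x - μ₀ • x) - (μ - μ₀) • x := by rw [sub_smul]; abel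
    rw [this, map_sub, hR₀l x hx trivial, hu]
    simp
  have hright : ∀ y, X (R₀ y) - μ • R₀ y = (u : E →L[𝕜] E) y := by
    intro y
    have : X (R₀ y) - μ • R₀ y = (X (R₀ y) - μ₀ • R₀ y) - (μ - μ₀) • R₀ y := by
      rw [sub_smul]; abel
    rw [this, hR₀r y trivial, hu]
    simp
  refine ⟨R₀ * ↑u⁻¹, fun y _ => ⟨(hR₀D _ trivial).1, trivial⟩, fun x hx _ => ?_, fun y _ => ?_⟩
  · rw [hcomm.eq, mul_apply_eq_comp, hleft x hx, ← mul_apply_eq_comp, Units.inv_mul,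
      one_apply_eq_self]
  · rw [mul_apply_eq_comp, hright, ← mul_apply_eq_comp, Units.mul_inv, one_apply_eq_self]

theorem IsResolventOn.apply_eq_smul_of_apply_eq_inv_smul (hR₀ : IsResolventOn X D ⊤ μ₀ R₀)
    (hμ : μ ≠ μ₀) {x : E} (hx : R₀ x = (μ - μ₀)⁻¹ • x) : x ∈ D ∧ X x = μ • x := by
  have hxR : x = (μ - μ₀) • R₀ x := by rw [hx, smul_inv_smul₀ (sub_ne_zero.mpr hμ)]
  refine ⟨hxR ▸ D.smul_mem _ (hR₀.1 x trivial).1, ?_⟩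
  have hXR : X (R₀ x) = x + μ₀ • R₀ x := eq_add_of_sub_eq (hR₀.2.2 x trivial)
  calc X x = (μ - μ₀) • X (R₀ x) := by rw [← map_smul, ← hxR]
    _ = (μ - μ₀) • x + μ₀ • ((μ - μ₀) • R₀ x) := by rw [hXR, smul_add, smul_comm]
    _ = μ • x := by rw [← hxR, sub_smul]; abel

theorem IsResolventOn.exists_apply_eq_smul [CompleteSpace E] (hR₀ : IsResolventOn X D ⊤ μ₀ R₀)
    (hK : IsCompactOperator R₀) (hμ : ¬ ∃ R, IsResolventOn X D ⊤ μ R) :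
    ∃ x ∈ D, x ≠ 0 ∧ X x = μ • x := by
  obtain rfl | hne := eq_or_ne μ μ₀
  · exact absurd ⟨R₀, hR₀⟩ hμ
  have hc : μ - μ₀ ≠ 0 := sub_ne_zero.mpr hne
  rcases hK.hasEigenvalue_or_mem_resolventSet (inv_ne_zero hc) with heig | hres
  · obtain ⟨x, hx⟩ := heig.exists_hasEigenvector
    obtain ⟨hxD, hXx⟩ := hR₀.apply_eq_smul_of_apply_eq_inv_smul hne hx.apply_eq_smul
    exact ⟨x, hxD, hx.2, hXx⟩
  · refine absurd (hR₀.exists_of_isUnit ?_) hμ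
    have : 1 - (μ - μ₀) • R₀ =
        algebraMap 𝕜 (E →L[𝕜] E) (μ - μ₀) * (algebraMap 𝕜 _ (μ - μ₀)⁻¹ - R₀) := by
      rw [mul_sub, ← map_mul, mul_inv_cancel₀ hc, map_one, Algebra.smul_def]
    rw [this]
    exact (hc.isUnit.map _).mul (spectrum.mem_resolventSet_iff.mp hres)

end Resolvent

theorem mem_blockSpectrum_iff {H : Type*} [NormedAddCommGroup H] [InnerProductSpace ℂ H]
    [CompleteSpace H] {X : H →ₗ[ℂ] H} {D V : Submodule ℂ H} {μ : ℂ} :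
    μ ∈ blockSpectrum X D V ↔ ¬ ∃ R, IsResolventOn X D V μ R :=
  Iff.rfl

theorem stmt9_general {H : Type*} [NormedAddCommGroup H] [InnerProductSpace ℂ H] [CompleteSpace H]
    {I : Type*}
    (X : H →ₗ[ℂ] H) (D : Submodule ℂ H)
    (P : I → H →L[ℂ] H)
    (hidem : ∀ n, IsIdempotentElem (P n))
    (hres : ∀ x : H, HasSum (fun n => P n x) x)
    (hinv : ∀ n, ∀ x ∈ D, P n x ∈ D)
    (hcomm : ∀ n, ∀ x ∈ D, X (P n x) = P n (X x))
    (hcompres : ∃ (μ₀ : ℂ) (R : H →L[ℂ] H), IsCompactOperator R ∧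
      (∀ y : H, R y ∈ D) ∧ (∀ x ∈ D, R (X x - μ₀ • x) = x) ∧
      (∀ y : H, X (R y) - μ₀ • R y = y)) :
    blockSpectrum X D ⊤ = ⋃ n, blockSpectrum X D (LinearMap.range (P n : H →ₗ[ℂ] H)) := by
  obtain ⟨μ₀, R₀, hK, hR₀D, hR₀l, hR₀r⟩ := hcompres
  have hR₀ : IsResolventOn X D ⊤ μ₀ R₀ :=
    ⟨fun y _ => ⟨hR₀D y, trivial⟩, fun x hx _ => hR₀l x hx, fun y _ => hR₀r y⟩
  ext μ
  simp only [Set.mem_iUnion, mem_blockSpectrum_iff]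
  constructor
  · intro hμ
    obtain ⟨x, hxD, hx0, hXx⟩ := hR₀.exists_apply_eq_smul hK hμ
    obtain ⟨n, hn⟩ : ∃ n, P n x ≠ 0 := by
      by_contra! hall
      exact hx0 ((hres x).unique (by simpa only [hall] using hasSum_zero))
    refine ⟨n, fun ⟨R, hR⟩ => hn (hR.eq_zero_of_apply_eq_smul (hinv n x hxD) ⟨x, rfl⟩ ?_)⟩
    rw [hcomm n x hxD, hXx, map_smul]
  · rintro ⟨n, hn⟩ ⟨R, hR⟩
    exact hn ⟨_, hR.projection_comp (hidem n) (hinv n) (hcomm n)⟩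

/-- If `X` is an operator with compact resolvent whose matrix is
block-diagonal with respect to a resolution of the identity `{P n}` (each `P n` leaves
the domain invariant and commutes with `X`), then the spectrum of `X` is the union of
the spectra of the restrictions of `X` to the ranges of the `P n`. -/
theorem stmt9 {H : Type*} [NormedAddCommGroup H] [InnerProductSpace ℂ H] [CompleteSpace H]
    {I : Type*} [Countable I]
    (X : H →ₗ[ℂ] H) (D : Submodule ℂ H)
    (P : I → H →L[ℂ] H)
    (hsa : ∀ n, IsSelfAdjoint (P n))
    (hidem : ∀ n, IsIdempotentElem (P n))
    (hdisj : ∀ m n, m ≠ n → (P m) ∘L (P n) = 0)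
    (hres : ∀ x : H, HasSum (fun n => P n x) x)
    (hinv : ∀ n, ∀ x ∈ D, P n x ∈ D)
    (hcomm : ∀ n, ∀ x ∈ D, X (P n x) = P n (X x))
    (hcompres : ∃ (μ₀ : ℂ) (R : H →L[ℂ] H), IsCompactOperator R ∧
      (∀ y : H, R y ∈ D) ∧ (∀ x ∈ D, R (X x - μ₀ • x) = x) ∧
      (∀ y : H, X (R y) - μ₀ • R y = y)) :
    blockSpectrum X D ⊤ = ⋃ n, blockSpectrum X D (LinearMap.range (P n : H →ₗ[ℂ] H)) :=
  stmt9_general X D P hidem hres hinv hcomm hcompres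
end

section
/- Let H be a Hilbert space, e ∈ H with ‖e‖ = 1, S, B₂₂S bounded operators, b₁ ∈ C, B₂₁e ∈ H, and let Ψ(z) = (b₁S − B₂₂S − ⟨B₁₂Sz, e⟩ S)z + B₂₁e. Set m = ‖b₁S − B₂₂S‖, n = s‖B₁₂S‖‖B₂₁‖ where s = ‖S‖ and ‖B₂₁‖ ≥ ‖B₂₁e‖. If m + 2√n ≤ 1 and n > 0, then with r = (1−m−√((1−m)²−4n))/(2n), Ψ maps the closed ball of radius r‖B₂₁‖ centered at 0 into itself and is non-expansive there: ‖Ψ(w) − Ψ(z)‖ ≤ (m + 2nr)‖w − z‖ ≤ ‖w − z‖ for all w, z in the ball. -/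
open scoped InnerProductSpace

/-- With `Ψ(z) = (b₁S − B₂₂S − ⟨B₁₂Sz, e⟩S) z + B₂₁e` (the operator
`A₀ = b₁S − B₂₂S`, `D = B₁₂S`, the vector `u = B₂₁e`), constants
`m = ‖A₀‖`, `s = ‖S‖`, `‖u‖ ≤ nb` and `n = s‖D‖·nb`, if `m + 2√n ≤ 1` and `n > 0`,
then with `r` the smaller root of `nt² + (m−1)t + 1`, `Ψ` maps the closed ball of radius
`r·nb` centered at `0` into itself and is non-expansive there with constant `m + 2nr ≤ 1`. -/
theorem stmt13 {H : Type*} [NormedAddCommGroup H] [InnerProductSpace ℂ H] [CompleteSpace H]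
    (e : H) (he : ‖e‖ = 1)
    (A₀ D S : H →L[ℂ] H) (u : H)
    (m s nb n r : ℝ)
    (hm : m = ‖A₀‖) (hs : s = ‖S‖) (hu : ‖u‖ ≤ nb)
    (hn : n = s * ‖D‖ * nb) (hn0 : 0 < n)
    (hcond : m + 2 * Real.sqrt n ≤ 1)
    (hr : r = (1 - m - Real.sqrt ((1 - m) ^ 2 - 4 * n)) / (2 * n))
    (Ψ : H → H)
    (hΨ : ∀ z, Ψ z = A₀ z - (⟪D z, e⟫_ℂ) • S z + u) :
    (∀ z : H, ‖z‖ ≤ r * nb → ‖Ψ z‖ ≤ r * nb) ∧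
    (∀ w z : H, ‖w‖ ≤ r * nb → ‖z‖ ≤ r * nb →
      ‖Ψ w - Ψ z‖ ≤ (m + 2 * n * r) * ‖w - z‖) ∧
    m + 2 * n * r ≤ 1 := by
  have hm0 : 0 ≤ m := hm ▸ norm_nonneg _
  have hs0 : 0 ≤ s := hs ▸ norm_nonneg _
  have hsD : 0 ≤ s * ‖D‖ := mul_nonneg hs0 (norm_nonneg _)
  have hnb : 0 ≤ nb := le_trans (norm_nonneg u) hu
  have hsqn : Real.sqrt n ^ 2 = n := Real.sq_sqrt hn0.le
  have hsqn0 : 0 ≤ Real.sqrt n := Real.sqrt_nonneg n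
  have h1m : 2 * Real.sqrt n ≤ 1 - m := by linarith
  have hdisc : 0 ≤ (1 - m) ^ 2 - 4 * n := by nlinarith
  set Δ := Real.sqrt ((1 - m) ^ 2 - 4 * n) with hΔdef
  have hΔ2 : Δ ^ 2 = (1 - m) ^ 2 - 4 * n := Real.sq_sqrt hdisc
  have hΔ0 : 0 ≤ Δ := Real.sqrt_nonneg _
  have hΔle : Δ ≤ 1 - m := by nlinarith
  have hn' : n ≠ 0 := hn0.ne'
  have h2nr : 2 * n * r = 1 - m - Δ := by rw [hr]; field_simp
  have hroot : n * r ^ 2 + (m - 1) * r + 1 = 0 := by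
    have h4 : 4 * n * (n * r ^ 2 + (m - 1) * r + 1) = 0 := by
      linear_combination (2 * n * r + 1 - m - Δ + 2 * (m - 1)) * h2nr + hΔ2
    have := mul_eq_zero.mp h4
    rcases this with h | h
    · exact absurd h (by positivity)
    · exact h
  have hr0 : 0 ≤ r := by
    rw [hr]
    apply div_nonneg (by linarith) (by linarith)
  have hrnb : 0 ≤ r * nb := mul_nonneg hr0 hnb
  have hfix : m * (r * nb) + (s * ‖D‖) * (r * nb) ^ 2 + nb = r * nb := by
    linear_combination nb * hroot - nb * r ^ 2 * hn
  refine ⟨?_, ?_, by linarith⟩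
  · intro z hz
    have hA : ‖A₀ z‖ ≤ m * ‖z‖ := hm ▸ A₀.le_opNorm z
    have hSz : ‖S z‖ ≤ s * ‖z‖ := hs ▸ S.le_opNorm z
    have hinner : ‖(⟪D z, e⟫_ℂ)‖ ≤ ‖D‖ * ‖z‖ := by
      calc ‖(⟪D z, e⟫_ℂ)‖ ≤ ‖D z‖ * ‖e‖ := norm_inner_le_norm _ _
        _ = ‖D z‖ := by rw [he, mul_one]
        _ ≤ ‖D‖ * ‖z‖ := D.le_opNorm z
    have htri : ‖Ψ z‖ ≤ ‖A₀ z‖ + ‖(⟪D z, e⟫_ℂ)‖ * ‖S z‖ + ‖u‖ := by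
      rw [hΨ z]
      calc ‖A₀ z - (⟪D z, e⟫_ℂ) • S z + u‖
          ≤ ‖A₀ z - (⟪D z, e⟫_ℂ) • S z‖ + ‖u‖ := norm_add_le _ _
        _ ≤ ‖A₀ z‖ + ‖(⟪D z, e⟫_ℂ) • S z‖ + ‖u‖ := by
            have := norm_sub_le (A₀ z) ((⟪D z, e⟫_ℂ) • S z); linarith
        _ = ‖A₀ z‖ + ‖(⟪D z, e⟫_ℂ)‖ * ‖S z‖ + ‖u‖ := by rw [norm_smul]
    have hprod : ‖(⟪D z, e⟫_ℂ)‖ * ‖S z‖ ≤ (s * ‖D‖) * ‖z‖ ^ 2 := by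
      calc ‖(⟪D z, e⟫_ℂ)‖ * ‖S z‖ ≤ (‖D‖ * ‖z‖) * (s * ‖z‖) :=
            mul_le_mul hinner hSz (norm_nonneg _)
              (mul_nonneg (norm_nonneg D) (norm_nonneg z))
        _ = (s * ‖D‖) * ‖z‖ ^ 2 := by ring
    have hz2 : ‖z‖ ^ 2 ≤ (r * nb) ^ 2 := pow_le_pow_left₀ (norm_nonneg z) hz 2
    have h1 := mul_le_mul_of_nonneg_left hz hm0
    have h2 := mul_le_mul_of_nonneg_left hz2 hsD
    linarith
  · intro w z hw hz
    have hdiff : Ψ w - Ψ z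
        = A₀ (w - z) - (⟪D (w - z), e⟫_ℂ) • S w - (⟪D z, e⟫_ℂ) • (S w - S z) := by
      rw [hΨ, hΨ, map_sub, map_sub, inner_sub_left, sub_smul, smul_sub]
      abel
    have hA : ‖A₀ (w - z)‖ ≤ m * ‖w - z‖ := hm ▸ A₀.le_opNorm (w - z)
    have hin1 : ‖(⟪D (w - z), e⟫_ℂ)‖ ≤ ‖D‖ * ‖w - z‖ := by
      calc ‖(⟪D (w - z), e⟫_ℂ)‖ ≤ ‖D (w - z)‖ * ‖e‖ := norm_inner_le_norm _ _
        _ = ‖D (w - z)‖ := by rw [he, mul_one]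
        _ ≤ ‖D‖ * ‖w - z‖ := D.le_opNorm _
    have hin2 : ‖(⟪D z, e⟫_ℂ)‖ ≤ ‖D‖ * (r * nb) := by
      calc ‖(⟪D z, e⟫_ℂ)‖ ≤ ‖D z‖ * ‖e‖ := norm_inner_le_norm _ _
        _ = ‖D z‖ := by rw [he, mul_one]
        _ ≤ ‖D‖ * ‖z‖ := D.le_opNorm _
        _ ≤ ‖D‖ * (r * nb) := mul_le_mul_of_nonneg_left hz (norm_nonneg D)
    have hSw : ‖S w‖ ≤ s * (r * nb) := by
      calc ‖S w‖ ≤ s * ‖w‖ := hs ▸ S.le_opNorm w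
        _ ≤ s * (r * nb) := mul_le_mul_of_nonneg_left hw hs0
    have hSwz : ‖S (w - z)‖ ≤ s * ‖w - z‖ := hs ▸ S.le_opNorm _
    have htri : ‖Ψ w - Ψ z‖ ≤ ‖A₀ (w - z)‖ + ‖(⟪D (w - z), e⟫_ℂ)‖ * ‖S w‖
        + ‖(⟪D z, e⟫_ℂ)‖ * ‖S (w - z)‖ := by
      rw [hdiff]
      calc ‖A₀ (w - z) - (⟪D (w - z), e⟫_ℂ) • S w - (⟪D z, e⟫_ℂ) • (S w - S z)‖
          ≤ ‖A₀ (w - z) - (⟪D (w - z), e⟫_ℂ) • S w‖ + ‖(⟪D z, e⟫_ℂ) • (S w - S z)‖ :=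
            norm_sub_le _ _
        _ ≤ ‖A₀ (w - z)‖ + ‖(⟪D (w - z), e⟫_ℂ) • S w‖ + ‖(⟪D z, e⟫_ℂ) • (S w - S z)‖ := by
            have := norm_sub_le (A₀ (w - z)) ((⟪D (w - z), e⟫_ℂ) • S w); linarith
        _ = _ := by rw [norm_smul, norm_smul, ← map_sub S w z]
    have ht2 : ‖(⟪D (w - z), e⟫_ℂ)‖ * ‖S w‖ ≤ n * r * ‖w - z‖ := by
      calc ‖(⟪D (w - z), e⟫_ℂ)‖ * ‖S w‖ ≤ (‖D‖ * ‖w - z‖) * (s * (r * nb)) :=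
            mul_le_mul hin1 hSw (norm_nonneg _)
              (mul_nonneg (norm_nonneg D) (norm_nonneg _))
        _ = n * r * ‖w - z‖ := by rw [hn]; ring
    have ht3 : ‖(⟪D z, e⟫_ℂ)‖ * ‖S (w - z)‖ ≤ n * r * ‖w - z‖ := by
      calc ‖(⟪D z, e⟫_ℂ)‖ * ‖S (w - z)‖ ≤ (‖D‖ * (r * nb)) * (s * ‖w - z‖) :=
            mul_le_mul hin2 hSwz (norm_nonneg _)
              (mul_nonneg (norm_nonneg D) hrnb)
        _ = n * r * ‖w - z‖ := by rw [hn]; ring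
    have hexp : (m + 2 * n * r) * ‖w - z‖
        = m * ‖w - z‖ + n * r * ‖w - z‖ + n * r * ‖w - z‖ := by ring
    linarith
end

section
/- In the eigenvalue-splitting setting, suppose y ∈ H satisfies y = Ψ(y) = (b₁S − B₂₂S − ⟨B₁₂Sy, e⟩S)y + B₂₁e, where Ae = λe, PS = SP = 0, S(λI − A) = (λI − A)S = Q = I − P, P is the rank-one orthogonal projection onto span{e}, and B is decomposed into blocks B_{ij} via P and Q with b₁ = ⟨B₁₁e, e⟩, b₂ = ⟨B₁₂Sy, e⟩. Then e' = e − Sy satisfies (A − B)e' = (λ − b₁ + b₂)e'. -/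
open scoped InnerProductSpace

/-- In the eigenvalue splitting setting (`Ae = λe`, `P` the rank-one
orthogonal projection onto `span{e}`, `Q = I − P`, `S` the reduced resolvent with
`PS = SP = 0` and `S(λI − A) = (λI − A)S = Q`, block entries `B_{ij}` of `B`), if `y`
is a fixed point of `Ψ`, i.e. `y = (b₁S − B₂₂S − ⟨B₁₂Sy, e⟩S)y + B₂₁e`, then
`e' = e − Sy` satisfies `(A − B)e' = (λ − b₁ + b₂)e'` with `b₁ = ⟨B₁₁e, e⟩` and
`b₂ = ⟨B₁₂Sy, e⟩`. -/
theorem stmt14 {H : Type*} [NormedAddCommGroup H] [InnerProductSpace ℂ H] [CompleteSpace H]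
    (A : H →ₗ[ℂ] H) (B S P : H →L[ℂ] H) (e : H) (lam : ℂ)
    (he : ‖e‖ = 1)
    (hP : ∀ x : H, P x = ⟪e, x⟫_ℂ • e)
    (hAe : A e = lam • e)
    (hPS : ∀ x : H, P (S x) = 0)
    (hSP : ∀ x : H, S (P x) = 0)
    (hS1 : ∀ x : H, S (lam • x - A x) = x - P x)
    (hS2 : ∀ x : H, lam • S x - A (S x) = x - P x)
    (Q : H →L[ℂ] H) (hQ : Q = ContinuousLinearMap.id ℂ H - P)
    (B11 B12 B21 B22 : H →L[ℂ] H)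
    (hB11 : B11 = P ∘L B ∘L P) (hB12 : B12 = P ∘L B ∘L Q)
    (hB21 : B21 = Q ∘L B ∘L P) (hB22 : B22 = Q ∘L B ∘L Q)
    (b₁ b₂ : ℂ) (hb₁ : b₁ = ⟪e, B11 e⟫_ℂ)
    (y : H) (hb₂ : b₂ = ⟪e, B12 (S y)⟫_ℂ)
    (hfix : y = b₁ • S y - B22 (S y) - b₂ • S y + B21 e) :
    A (e - S y) - B (e - S y) = (lam - b₁ + b₂) • (e - S y) := by
  have hee : ⟪e, e⟫_ℂ = 1 := by
    rw [inner_self_eq_norm_sq_to_K, he]; norm_num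
  have hPe : P e = e := by rw [hP, hee, one_smul]
  have hPP : ∀ x : H, P (P x) = P x := by
    intro x; rw [hP x, map_smul, hPe]
  have hPQ : ∀ x : H, P (Q x) = 0 := by
    intro x; simp [hQ, hPP x]
  have hQSy : Q (S y) = S y := by simp [hQ, hPS y]
  have hPBe : P (B e) = b₁ • e := by
    have : B11 e = P (B e) := by rw [hB11]; simp [hPe]
    rw [hb₁, this, hP (B e), inner_smul_right, hee, mul_one]
  have hPBSy : P (B (S y)) = b₂ • e := by
    have : B12 (S y) = P (B (S y)) := by rw [hB12]; simp [hQSy]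
    rw [hb₂, this, hP (B (S y)), inner_smul_right, hee, mul_one]
  have hB21e : B21 e = B e - b₁ • e := by
    rw [hB21]; simp [hQ, hPe, hPBe]
  have hB22Sy : B22 (S y) = B (S y) - b₂ • e := by
    rw [hB22]; simp [hQ, hQSy, hPBSy, hPS y]
  have hPy : P y = 0 := by
    rw [hfix]
    simp only [map_add, map_sub, map_smul, hPS y]
    rw [hB22, hB21]
    simp [hPQ, hPS y]
  have hASy : A (S y) = lam • S y - y := by
    have := hS2 y
    rw [hPy, sub_zero] at this
    linear_combination (norm := module) -this
  rw [hB22Sy, hB21e] at hfix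
  rw [map_sub, map_sub, hAe, hASy]
  linear_combination (norm := module) hfix
end
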